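/- arXiv:2603.25148 — 2 statements merged into one kernel-verified Lean document; each statement's English description precedes it below -/
import Mathlib

section
/- Let S be a Boolean inverse monoid and φ, ψ ∈ S with φ ⊥ ψ. Then U_φ ∩ U_ψ = ∅ and U_φ ∪ U_ψ = U_{φ∨ψ}. -/
universe u

namespace BIM

class InverseSemigroup (S : Type u) extends Semigroup S, Inv S where
  mul_inv_mul : ∀ φ : S, φ * φ⁻¹ * φ = φ
  inv_mul_inv : ∀ φ : S, φ⁻¹ * φ * φ⁻¹ = φ⁻¹
  inv_unique : ∀ φ ψ : S, φ * ψ * φ = φ → ψ * φ * ψ = ψ → ψ = φ⁻¹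

variable {S : Type u}

section InvSg
variable [InverseSemigroup S]

def cle (φ ψ : S) : Prop := φ = ψ * φ⁻¹ * φ

lemma mim (φ : S) : φ * φ⁻¹ * φ = φ := InverseSemigroup.mul_inv_mul φ
lemma imi (φ : S) : φ⁻¹ * φ * φ⁻¹ = φ⁻¹ := InverseSemigroup.inv_mul_inv φ

lemma inv_inv' (φ : S) : φ⁻¹⁻¹ = φ :=
  (InverseSemigroup.inv_unique φ⁻¹ φ (imi φ) (mim φ)).symm

lemma idem_inv {p : S} (hp : p * p = p) : p⁻¹ = p :=
  (InverseSemigroup.inv_unique p p (by rw [hp, hp]) (by rw [hp, hp])).symm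

lemma inv_mul_idem (φ : S) : (φ⁻¹ * φ) * (φ⁻¹ * φ) = φ⁻¹ * φ := by
  rw [mul_assoc φ⁻¹ φ (φ⁻¹ * φ), ← mul_assoc φ φ⁻¹ φ, mim]

lemma mul_inv_idem (φ : S) : (φ * φ⁻¹) * (φ * φ⁻¹) = φ * φ⁻¹ := by
  rw [mul_assoc φ φ⁻¹ (φ * φ⁻¹), ← mul_assoc φ⁻¹ φ φ⁻¹, imi]

lemma idem_absorb {e : S} (he : e * e = e) (x : S) : e * (e * x) = e * x := by
  rw [← mul_assoc, he]

lemma mul_idem {e f : S} (he : e * e = e) (hf : f * f = f) :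
    (e * f) * (e * f) = e * f := by
  set a := (e * f)⁻¹ with ha
  have k1 : (e * f) * a * (e * f) = e * f := mim (e * f)
  have k2 : a * (e * f) * a = a := imi (e * f)
  have k2x : ∀ x : S, a * (e * (f * (a * x))) = a * x := by
    intro x
    have := congrArg (· * x) k2
    simp only [mul_assoc] at this
    simpa [mul_assoc] using this
  have hme : (e * f) * (f * (a * e)) * (e * f) = e * f := by
    have k1' : e * (f * (a * (e * f))) = e * f := by
      simpa [mul_assoc] using k1
    calc (e * f) * (f * (a * e)) * (e * f)
        = e * (f * (f * (a * (e * (e * f))))) := by simp only [mul_assoc]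
      _ = e * (f * (a * (e * (e * f)))) := by rw [idem_absorb hf]
      _ = e * (f * (a * (e * f))) := by rw [idem_absorb he]
      _ = e * f := k1'
  have hmh : (f * (a * e)) * (e * f) * (f * (a * e)) = f * (a * e) := by
    calc (f * (a * e)) * (e * f) * (f * (a * e))
        = f * (a * (e * (e * (f * (f * (a * e)))))) := by simp only [mul_assoc]
      _ = f * (a * (e * (f * (f * (a * e))))) := by rw [idem_absorb he]
      _ = f * (a * (e * (f * (a * e)))) := by rw [idem_absorb hf]
      _ = f * (a * e) := by rw [k2x]
  have hha : f * (a * e) = a := InverseSemigroup.inv_unique (e * f) (f * (a * e)) hme hmh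
  have hh : (f * (a * e)) * (f * (a * e)) = f * (a * e) := by
    calc (f * (a * e)) * (f * (a * e))
        = f * (a * (e * (f * (a * e)))) := by simp only [mul_assoc]
      _ = f * (a * e) := by rw [k2x]
  have haa : a * a = a := by rw [← hha]; exact hh
  have hefa : e * f = a := by
    rw [← idem_inv haa, ha, inv_inv']
  rw [hefa]; exact haa

lemma idem_comm {e f : S} (he : e * e = e) (hf : f * f = f) : e * f = f * e := by
  have hef : (e * f) * (e * f) = e * f := mul_idem he hf
  have hfe : (f * e) * (f * e) = f * e := mul_idem hf he
  have h1 : (e * f) * (f * e) * (e * f) = e * f := by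
    calc (e * f) * (f * e) * (e * f)
        = e * (f * (f * (e * (e * f)))) := by simp only [mul_assoc]
      _ = e * (f * (e * (e * f))) := by rw [idem_absorb hf]
      _ = e * (f * (e * f)) := by rw [idem_absorb he]
      _ = (e * f) * (e * f) := by simp only [mul_assoc]
      _ = e * f := hef
  have h2 : (f * e) * (e * f) * (f * e) = f * e := by
    calc (f * e) * (e * f) * (f * e)
        = f * (e * (e * (f * (f * e)))) := by simp only [mul_assoc]
      _ = f * (e * (f * (f * e))) := by rw [idem_absorb he]
      _ = f * (e * (f * e)) := by rw [idem_absorb hf]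
      _ = (f * e) * (f * e) := by simp only [mul_assoc]
      _ = f * e := hfe
  have : f * e = (e * f)⁻¹ := InverseSemigroup.inv_unique (e * f) (f * e) h1 h2
  rw [this, idem_inv hef]

lemma conj_idem (φ : S) {p : S} (hp : p * p = p) :
    (φ⁻¹ * p * φ) * (φ⁻¹ * p * φ) = φ⁻¹ * p * φ := by
  have hcomm : p * (φ * φ⁻¹) = (φ * φ⁻¹) * p := idem_comm hp (mul_inv_idem φ)
  calc (φ⁻¹ * p * φ) * (φ⁻¹ * p * φ)
      = φ⁻¹ * (p * (φ * φ⁻¹) * (p * φ)) := by simp only [mul_assoc]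
    _ = φ⁻¹ * ((φ * φ⁻¹) * p * (p * φ)) := by rw [hcomm]
    _ = φ⁻¹ * (φ * φ⁻¹) * (p * (p * φ)) := by simp only [mul_assoc]
    _ = φ⁻¹ * (φ * φ⁻¹) * (p * φ) := by rw [idem_absorb hp]
    _ = φ⁻¹ * (p * φ) := by rw [← mul_assoc φ⁻¹ φ φ⁻¹, imi]
    _ = φ⁻¹ * p * φ := by rw [mul_assoc]

lemma cle_idem_iff {p : S} (q : S) (hp : p * p = p) : cle p q ↔ p = q * p := by
  unfold cle
  rw [idem_inv hp, mul_assoc q p p, hp]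

end InvSg

class InverseSemigroupWithZero (S : Type u) extends InverseSemigroup S, Zero S where
  zero_mul' : ∀ φ : S, 0 * φ = 0
  mul_zero' : ∀ φ : S, φ * 0 = 0

def orth [InverseSemigroupWithZero S] (φ ψ : S) : Prop := φ * ψ⁻¹ = 0 ∧ φ⁻¹ * ψ = 0

class AdditiveInvSemigroup (S : Type u) extends InverseSemigroupWithZero S where
  vsup : S → S → S
  cle_vsup_left : ∀ φ ψ : S, orth φ ψ → cle φ (vsup φ ψ)
  cle_vsup_right : ∀ φ ψ : S, orth φ ψ → cle ψ (vsup φ ψ)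
  vsup_cle : ∀ φ ψ χ : S, orth φ ψ → cle φ χ → cle ψ χ → cle (vsup φ ψ) χ
  mul_vsup : ∀ φ ψ χ : S, orth φ ψ → χ * vsup φ ψ = vsup (χ * φ) (χ * ψ)
  vsup_mul : ∀ φ ψ χ : S, orth φ ψ → vsup φ ψ * χ = vsup (φ * χ) (ψ * χ)

abbrev E (S : Type u) [Mul S] : Type u := {p : S // p * p = p}

class BooleanInverseMonoid (S : Type u) extends AdditiveInvSemigroup S where
  vinf : S → S → S
  vinf_cle_left : ∀ φ ψ : S, cle (vinf φ ψ) φ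
  vinf_cle_right : ∀ φ ψ : S, cle (vinf φ ψ) ψ
  cle_vinf : ∀ φ ψ χ : S, cle χ φ → cle χ ψ → cle χ (vinf φ ψ)
  ba : BooleanAlgebra (E S)
  ba_le_iff : ∀ p q : E S, (letI := ba; p ≤ q) ↔ cle p.1 q.1

instance (priority := 100) instBAE [BooleanInverseMonoid S] : BooleanAlgebra (E S) :=
  BooleanInverseMonoid.ba

lemma ba_le [BooleanInverseMonoid S] (p q : E S) : p ≤ q ↔ cle p.1 q.1 :=
  BooleanInverseMonoid.ba_le_iff p q

section BIMsec
variable [BooleanInverseMonoid S]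

lemma E_le_iff (p q : E S) : p ≤ q ↔ p.1 = q.1 * p.1 := by
  rw [ba_le]; exact cle_idem_iff q.1 p.2

/-- In `E S`, the Boolean-algebra meet is given by the semigroup product. -/
lemma inf_coe (p q : E S) : ((p ⊓ q : E S) : S) = p.1 * q.1 := by
  have hm : (p.1 * q.1) * (p.1 * q.1) = p.1 * q.1 := mul_idem p.2 q.2
  have h1 : (⟨p.1 * q.1, hm⟩ : E S) ≤ p := by
    rw [E_le_iff]
    show p.1 * q.1 = p.1 * (p.1 * q.1)
    rw [← mul_assoc, p.2]
  have h2 : (⟨p.1 * q.1, hm⟩ : E S) ≤ q := by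
    rw [E_le_iff]
    show p.1 * q.1 = q.1 * (p.1 * q.1)
    rw [← mul_assoc, idem_comm q.2 p.2, mul_assoc, q.2]
  have h3 : p ⊓ q ≤ (⟨p.1 * q.1, hm⟩ : E S) := by
    have hp' : (p ⊓ q : E S).1 = p.1 * (p ⊓ q).1 := (E_le_iff _ _).1 inf_le_left
    have hq' : (p ⊓ q : E S).1 = q.1 * (p ⊓ q).1 := (E_le_iff _ _).1 inf_le_right
    rw [E_le_iff]
    show (p ⊓ q : E S).1 = p.1 * q.1 * (p ⊓ q).1
    rw [mul_assoc, ← hq', ← hp']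
  have : p ⊓ q = (⟨p.1 * q.1, hm⟩ : E S) := le_antisymm h3 (le_inf h1 h2)
  exact congrArg Subtype.val this

/-- A character on `E S`: a Boolean algebra homomorphism into the two-element
Boolean algebra. -/
structure Character (S : Type u) [BooleanInverseMonoid S] where
  toFun : E S → Bool
  map_inf' : ∀ p q : E S, toFun (p ⊓ q) = (toFun p && toFun q)
  map_sup' : ∀ p q : E S, toFun (p ⊔ q) = (toFun p || toFun q)
  map_top' : toFun ⊤ = true
  map_bot' : toFun ⊥ = false

lemma Character.ext {x y : Character S} (h : ∀ p, x.toFun p = y.toFun p) : x = y := by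
  cases x; cases y
  congr 1
  funext p
  exact h p

instance : TopologicalSpace (Character S) :=
  TopologicalSpace.induced (fun x : Character S => x.toFun) inferInstance

/-- `Ê(S)_φ`, the set of characters `x` with `x(φ⁻¹φ) = 1`. -/
def EhatAt (φ : S) : Set (Character S) :=
  {x | x.toFun ⟨φ⁻¹ * φ, inv_mul_idem φ⟩ = true}

/-- `α_φ(x)` as a raw function on idempotents: `p ↦ x(φ⁻¹ p φ)`. -/
def alphaFun (φ : S) (x : Character S) : E S → Bool :=
  fun p => x.toFun ⟨φ⁻¹ * p.1 * φ, conj_idem φ p.2⟩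

/-- The underlying set `S ∗ Ê(S)` of pairs `(φ, x)` with `x ∈ Ê(S)_φ`. -/
abbrev SStar (S : Type u) [BooleanInverseMonoid S] : Type u :=
  {z : S × Character S // z.2 ∈ EhatAt z.1}

/-- The equivalence relation defining `𝒢(S)`. -/
def rel (a b : SStar S) : Prop :=
  a.1.2 = b.1.2 ∧ ∃ p : E S, a.1.2.toFun p = true ∧ a.1.1 * p.1 = b.1.1 * p.1

lemma rel_equivalence : Equivalence (rel (S := S)) := by
  constructor
  · intro a
    exact ⟨rfl, ⟨⊤, a.1.2.map_top', rfl⟩⟩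
  · rintro a b ⟨hxy, p, hp1, hp2⟩
    exact ⟨hxy.symm, p, by rw [← hxy]; exact hp1, hp2.symm⟩
  · rintro a b c ⟨hxy, p, hp1, hp2⟩ ⟨hyz, q, hq1, hq2⟩
    refine ⟨hxy.trans hyz, ⟨⟨p.1 * q.1, mul_idem p.2 q.2⟩, ?_, ?_⟩⟩
    · have : (⟨p.1 * q.1, mul_idem p.2 q.2⟩ : E S) = p ⊓ q :=
        Subtype.ext (inf_coe p q).symm
      rw [this, a.1.2.map_inf', hp1]
      rw [hxy]
      rw [hq1]
      rfl
    · show a.1.1 * (p.1 * q.1) = c.1.1 * (p.1 * q.1)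
      have h1 : a.1.1 * (p.1 * q.1) = b.1.1 * (p.1 * q.1) := by
        rw [← mul_assoc, hp2, mul_assoc]
      have h2 : b.1.1 * (p.1 * q.1) = c.1.1 * (p.1 * q.1) := by
        rw [idem_comm p.2 q.2, ← mul_assoc, hq2, mul_assoc]
      rw [h1, h2]

instance gpdSetoid (S : Type u) [BooleanInverseMonoid S] : Setoid (SStar S) :=
  ⟨rel, rel_equivalence⟩

/-- The groupoid `𝒢(S)` as a set: the quotient of `S ∗ Ê(S)` by `∼`. -/
def Gpd (S : Type u) [BooleanInverseMonoid S] : Type u := Quotient (gpdSetoid S)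

/-- The class `[φ, x]` in `𝒢(S)`. -/
def mk (φ : S) (x : Character S) (hx : x ∈ EhatAt φ) : Gpd S :=
  Quotient.mk (gpdSetoid S) ⟨(φ, x), hx⟩

/-- The basic set `U_φ = {[φ, x] : x ∈ Ê(S)_φ}`. -/
def U (φ : S) : Set (Gpd S) := {g | ∃ (x : Character S) (hx : x ∈ EhatAt φ), g = mk φ x hx}

/-- The topology on `𝒢(S)` generated by the sets `U_φ`. -/
instance : TopologicalSpace (Gpd S) :=
  TopologicalSpace.generateFrom {V : Set (Gpd S) | ∃ φ : S, V = U φ}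

end BIMsec

end BIM


open BIM


section AuxLemmas
variable {S : Type u}

section
variable [InverseSemigroup S]

lemma bim_mul_inv_rev (a b : S) : (a * b)⁻¹ = b⁻¹ * a⁻¹ := by
  symm
  apply InverseSemigroup.inv_unique
  · have hc : (b * b⁻¹) * (a⁻¹ * a) = (a⁻¹ * a) * (b * b⁻¹) :=
      idem_comm (mul_inv_idem b) (inv_mul_idem a)
    calc a * b * (b⁻¹ * a⁻¹) * (a * b)
        = a * ((b * b⁻¹) * (a⁻¹ * a)) * b := by simp only [mul_assoc]
      _ = a * ((a⁻¹ * a) * (b * b⁻¹)) * b := by rw [hc]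
      _ = (a * a⁻¹ * a) * (b * b⁻¹ * b) := by simp only [mul_assoc]
      _ = a * b := by rw [mim, mim]
  · have hc : (a⁻¹ * a) * (b * b⁻¹) = (b * b⁻¹) * (a⁻¹ * a) :=
      idem_comm (inv_mul_idem a) (mul_inv_idem b)
    calc (b⁻¹ * a⁻¹) * (a * b) * (b⁻¹ * a⁻¹)
        = b⁻¹ * ((a⁻¹ * a) * (b * b⁻¹)) * a⁻¹ := by simp only [mul_assoc]
      _ = b⁻¹ * ((b * b⁻¹) * (a⁻¹ * a)) * a⁻¹ := by rw [hc]
      _ = (b⁻¹ * b * b⁻¹) * (a⁻¹ * a * a⁻¹) := by simp only [mul_assoc]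
      _ = b⁻¹ * a⁻¹ := by rw [imi, imi]

lemma bim_cle_refl (a : S) : cle a a := (mim a).symm

lemma bim_cle_key {x y : S} (hxy : x = y * (x⁻¹ * x)) :
    (y⁻¹ * y) * (x⁻¹ * x) = x⁻¹ * x := by
  have hxinv : x⁻¹ = (x⁻¹ * x) * y⁻¹ := by
    conv_lhs => rw [hxy, bim_mul_inv_rev, idem_inv (inv_mul_idem x)]
  have h1 : (x⁻¹ * x) * (y⁻¹ * y) * (x⁻¹ * x) = x⁻¹ * x := by
    calc (x⁻¹ * x) * (y⁻¹ * y) * (x⁻¹ * x)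
        = ((x⁻¹ * x) * y⁻¹) * (y * (x⁻¹ * x)) := by simp only [mul_assoc]
      _ = x⁻¹ * x := by rw [← hxinv, ← hxy]
  have hcomm : (x⁻¹ * x) * (y⁻¹ * y) = (y⁻¹ * y) * (x⁻¹ * x) :=
    idem_comm (inv_mul_idem x) (inv_mul_idem y)
  calc (y⁻¹ * y) * (x⁻¹ * x)
      = (y⁻¹ * y) * ((x⁻¹ * x) * (x⁻¹ * x)) := by rw [inv_mul_idem]
    _ = ((y⁻¹ * y) * (x⁻¹ * x)) * (x⁻¹ * x) := by rw [← mul_assoc]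
    _ = ((x⁻¹ * x) * (y⁻¹ * y)) * (x⁻¹ * x) := by rw [hcomm]
    _ = x⁻¹ * x := h1

lemma bim_cle_antisymm {a b : S} (hab : cle a b) (hba : cle b a) : a = b := by
  have hab' : a = b * (a⁻¹ * a) := by rw [← mul_assoc]; exact hab
  have hba' : b = a * (b⁻¹ * b) := by rw [← mul_assoc]; exact hba
  have h1 : (b⁻¹ * b) * (a⁻¹ * a) = a⁻¹ * a := bim_cle_key hab'
  have h2 : (a⁻¹ * a) * (b⁻¹ * b) = b⁻¹ * b := bim_cle_key hba'
  have hcomm : (a⁻¹ * a) * (b⁻¹ * b) = (b⁻¹ * b) * (a⁻¹ * a) :=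
    idem_comm (inv_mul_idem a) (inv_mul_idem b)
  have heq : a⁻¹ * a = b⁻¹ * b := by rw [← h1, ← hcomm, h2]
  rw [hab', heq, ← mul_assoc, mim]

end

section
variable [InverseSemigroupWithZero S]

lemma bim_zm (a : S) : (0 : S) * a = 0 := InverseSemigroupWithZero.zero_mul' a
lemma bim_mz (a : S) : a * (0 : S) = 0 := InverseSemigroupWithZero.mul_zero' a

lemma bim_zero_inv : ((0 : S))⁻¹ = 0 := idem_inv (bim_zm 0)

lemma bim_cle_zero (a : S) : cle (0 : S) a := by
  unfold cle
  rw [bim_zero_inv, bim_mz]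

lemma bim_orth_zero_right (a : S) : orth a (0 : S) :=
  ⟨by rw [bim_zero_inv, bim_mz], by rw [bim_mz]⟩

lemma bim_orth_zero_left (a : S) : orth (0 : S) a :=
  ⟨by rw [bim_zm], by rw [bim_zero_inv, bim_zm]⟩

lemma bim_orth_inv {a b : S} (h : orth a b) : orth a⁻¹ b⁻¹ :=
  ⟨by rw [inv_inv']; exact h.2, by rw [inv_inv']; exact h.1⟩

lemma bim_orth_swap1 {a b : S} (h : orth a b) : b * a⁻¹ = 0 := by
  rw [← inv_inv' b, ← bim_mul_inv_rev, h.1, bim_zero_inv]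

lemma bim_orth_swap2 {a b : S} (h : orth a b) : b⁻¹ * a = 0 := by
  rw [← inv_inv' a, ← bim_mul_inv_rev, h.2, bim_zero_inv]

end

section
variable [AdditiveInvSemigroup S]

open AdditiveInvSemigroup

lemma bim_vsup_zero_right (a : S) : vsup a (0 : S) = a :=
  bim_cle_antisymm
    (vsup_cle a 0 a (bim_orth_zero_right a) (bim_cle_refl a) (bim_cle_zero a))
    (cle_vsup_left a 0 (bim_orth_zero_right a))

lemma bim_vsup_zero_left (a : S) : vsup (0 : S) a = a :=
  bim_cle_antisymm
    (vsup_cle 0 a a (bim_orth_zero_left a) (bim_cle_zero a) (bim_cle_refl a))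
    (cle_vsup_right 0 a (bim_orth_zero_left a))

lemma bim_orth_e {a b : S} (h : orth a b) : orth (a⁻¹ * a) (b⁻¹ * b) := by
  constructor
  · rw [idem_inv (inv_mul_idem b), mul_assoc, ← mul_assoc a b⁻¹ b, h.1, bim_zm, bim_mz]
  · rw [idem_inv (inv_mul_idem a), mul_assoc, ← mul_assoc a b⁻¹ b, h.1, bim_zm, bim_mz]

lemma bim_orth_f {a b : S} (h : orth a b) : orth (a * a⁻¹) (b * b⁻¹) := by
  constructor
  · rw [idem_inv (mul_inv_idem b), mul_assoc, ← mul_assoc a⁻¹ b b⁻¹, h.2, bim_zm, bim_mz]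
  · rw [idem_inv (mul_inv_idem a), mul_assoc, ← mul_assoc a⁻¹ b b⁻¹, h.2, bim_zm, bim_mz]

lemma bim_vsup_inv {a b : S} (h : orth a b) : (vsup a b)⁻¹ = vsup a⁻¹ b⁻¹ := by
  have h' : orth a⁻¹ b⁻¹ := bim_orth_inv h
  have hba : b * a⁻¹ = 0 := bim_orth_swap1 h
  have hbia : b⁻¹ * a = 0 := bim_orth_swap2 h
  have hστ : vsup a b * vsup a⁻¹ b⁻¹ = vsup (a * a⁻¹) (b * b⁻¹) := by
    rw [mul_vsup a⁻¹ b⁻¹ (vsup a b) h', vsup_mul a b a⁻¹ h, vsup_mul a b b⁻¹ h,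
      hba, h.1, bim_vsup_zero_right, bim_vsup_zero_left]
  have hστσ : vsup a b * vsup a⁻¹ b⁻¹ * vsup a b = vsup a b := by
    rw [hστ, vsup_mul _ _ (vsup a b) (bim_orth_f h),
      mul_vsup a b (a * a⁻¹) h, mul_vsup a b (b * b⁻¹) h,
      mim a, mim b, mul_assoc a a⁻¹ b, h.2, bim_mz,
      mul_assoc b b⁻¹ a, bim_orth_swap2 h, bim_mz,
      bim_vsup_zero_right, bim_vsup_zero_left]
  have hτσ : vsup a⁻¹ b⁻¹ * vsup a b = vsup (a⁻¹ * a) (b⁻¹ * b) := by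
    rw [vsup_mul a⁻¹ b⁻¹ (vsup a b) h', mul_vsup a b a⁻¹ h, mul_vsup a b b⁻¹ h,
      h.2, hbia, bim_vsup_zero_right, bim_vsup_zero_left]
  have hτστ : vsup a⁻¹ b⁻¹ * vsup a b * vsup a⁻¹ b⁻¹ = vsup a⁻¹ b⁻¹ := by
    rw [hτσ, vsup_mul _ _ (vsup a⁻¹ b⁻¹) (bim_orth_e h),
      mul_vsup a⁻¹ b⁻¹ (a⁻¹ * a) h', mul_vsup a⁻¹ b⁻¹ (b⁻¹ * b) h',
      imi a, imi b, mul_assoc a⁻¹ a b⁻¹, h.1, bim_mz,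
      mul_assoc b⁻¹ b a⁻¹, hba, bim_mz,
      bim_vsup_zero_right, bim_vsup_zero_left]
  exact (InverseSemigroup.inv_unique (vsup a b) (vsup a⁻¹ b⁻¹) hστσ hτστ).symm

lemma bim_vsup_inv_mul {a b : S} (h : orth a b) :
    (vsup a b)⁻¹ * vsup a b = vsup (a⁻¹ * a) (b⁻¹ * b) := by
  rw [bim_vsup_inv h, vsup_mul a⁻¹ b⁻¹ (vsup a b) (bim_orth_inv h),
    mul_vsup a b a⁻¹ h, mul_vsup a b b⁻¹ h, h.2, bim_orth_swap2 h,
    bim_vsup_zero_right, bim_vsup_zero_left]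

end

section
variable [BooleanInverseMonoid S]

open AdditiveInvSemigroup

lemma bim_bot_coe : ((⊥ : E S) : S) = 0 := by
  have hz : ((0 : S)) * 0 = 0 := bim_zm 0
  have h1 : (⟨0, hz⟩ : E S) ≤ ⊥ := by
    rw [E_le_iff]
    exact (bim_mz _).symm
  have h2 : (⟨0, hz⟩ : E S) = ⊥ := le_antisymm h1 bot_le
  rw [← h2]

lemma bim_char_mono (x : Character S) {p q : E S} (hpq : p ≤ q)
    (hp : x.toFun p = true) : x.toFun q = true := by
  have hinf : p ⊓ q = p := inf_eq_left.mpr hpq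
  have h2 := x.map_inf' p q
  rw [hinf, hp] at h2
  simpa using h2.symm

lemma bim_Esup {a b : S} (h : orth a b) :
    (⟨(vsup a b)⁻¹ * vsup a b, inv_mul_idem _⟩ : E S)
      = ⟨a⁻¹ * a, inv_mul_idem a⟩ ⊔ ⟨b⁻¹ * b, inv_mul_idem b⟩ := by
  have he := bim_orth_e h
  have hcoe : (vsup a b)⁻¹ * vsup a b = vsup (a⁻¹ * a) (b⁻¹ * b) := bim_vsup_inv_mul h
  apply le_antisymm
  · rw [ba_le]
    have h1 : cle (a⁻¹ * a)
        ((⟨a⁻¹ * a, inv_mul_idem a⟩ ⊔ ⟨b⁻¹ * b, inv_mul_idem b⟩ : E S) : S) :=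
      (ba_le (⟨a⁻¹ * a, inv_mul_idem a⟩ : E S)
        (⟨a⁻¹ * a, inv_mul_idem a⟩ ⊔ ⟨b⁻¹ * b, inv_mul_idem b⟩)).mp le_sup_left
    have h2 : cle (b⁻¹ * b)
        ((⟨a⁻¹ * a, inv_mul_idem a⟩ ⊔ ⟨b⁻¹ * b, inv_mul_idem b⟩ : E S) : S) :=
      (ba_le (⟨b⁻¹ * b, inv_mul_idem b⟩ : E S)
        (⟨a⁻¹ * a, inv_mul_idem a⟩ ⊔ ⟨b⁻¹ * b, inv_mul_idem b⟩)).mp le_sup_right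
    show cle ((vsup a b)⁻¹ * vsup a b) _
    rw [hcoe]
    exact vsup_cle _ _ _ he h1 h2
  · apply sup_le
    · rw [ba_le]
      show cle (a⁻¹ * a) ((vsup a b)⁻¹ * vsup a b)
      rw [hcoe]
      exact cle_vsup_left _ _ he
    · rw [ba_le]
      show cle (b⁻¹ * b) ((vsup a b)⁻¹ * vsup a b)
      rw [hcoe]
      exact cle_vsup_right _ _ he

lemma bim_Ele {a b : S} (hcle : cle (a⁻¹ * a) (b⁻¹ * b)) :
    (⟨a⁻¹ * a, inv_mul_idem a⟩ : E S) ≤ ⟨b⁻¹ * b, inv_mul_idem b⟩ :=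
  (ba_le _ _).mpr hcle

end

end AuxLemmas

/-- If φ ⊥ ψ then U_φ ∩ U_ψ = ∅ and U_φ ∪ U_ψ = U_{φ∨ψ}. -/
theorem stmt8 {S : Type u} [BooleanInverseMonoid S] (φ ψ : S) (h : orth φ ψ) :
    U φ ∩ U ψ = ∅ ∧ U φ ∪ U ψ = U (AdditiveInvSemigroup.vsup φ ψ) := by
  have hψiφ : ψ⁻¹ * φ = 0 := bim_orth_swap2 h
  set σ := AdditiveInvSemigroup.vsup φ ψ with hσdef
  have hcoe : σ⁻¹ * σ = AdditiveInvSemigroup.vsup (φ⁻¹ * φ) (ψ⁻¹ * ψ) := bim_vsup_inv_mul h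
  have he := bim_orth_e h
  have hcleφ : cle φ σ := AdditiveInvSemigroup.cle_vsup_left φ ψ h
  have hcleψ : cle ψ σ := AdditiveInvSemigroup.cle_vsup_right φ ψ h
  have hcleφe : cle (φ⁻¹ * φ) (σ⁻¹ * σ) := by
    rw [hcoe]; exact AdditiveInvSemigroup.cle_vsup_left _ _ he
  have hcleψe : cle (ψ⁻¹ * ψ) (σ⁻¹ * σ) := by
    rw [hcoe]; exact AdditiveInvSemigroup.cle_vsup_right _ _ he
  constructor
  · ext g
    simp only [Set.mem_inter_iff, Set.mem_empty_iff_false, iff_false, not_and]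
    rintro ⟨x, hx, rfl⟩ ⟨y, hy, hgy⟩
    have hrel : rel (⟨(φ, x), hx⟩ : SStar S) ⟨(ψ, y), hy⟩ := Quotient.exact hgy
    obtain ⟨hxy, p, hp1, hp2⟩ := hrel
    have hxy' : x = y := hxy
    have hp1' : x.toFun p = true := hp1
    have hp2' : φ * p.1 = ψ * p.1 := hp2
    have hy' : y.toFun ⟨ψ⁻¹ * ψ, inv_mul_idem ψ⟩ = true := hy
    have hq : (⟨ψ⁻¹ * ψ, inv_mul_idem ψ⟩ ⊓ p : E S) = ⊥ := by
      apply Subtype.ext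
      rw [inf_coe, bim_bot_coe]
      show ψ⁻¹ * ψ * p.1 = 0
      rw [mul_assoc, ← hp2', ← mul_assoc, hψiφ, bim_zm]
    have hxq := x.map_inf' ⟨ψ⁻¹ * ψ, inv_mul_idem ψ⟩ p
    rw [hq, x.map_bot', hp1', hxy', hy'] at hxq
    simp at hxq
  · ext g
    simp only [Set.mem_union]
    constructor
    · rintro (⟨x, hx, rfl⟩ | ⟨x, hx, rfl⟩)
      · have hx' : x.toFun ⟨φ⁻¹ * φ, inv_mul_idem φ⟩ = true := hx
        have hxσ : x ∈ EhatAt σ := bim_char_mono x (bim_Ele hcleφe) hx'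
        refine ⟨x, hxσ, ?_⟩
        apply Quotient.sound
        refine ⟨rfl, ⟨⟨φ⁻¹ * φ, inv_mul_idem φ⟩, hx', ?_⟩⟩
        show φ * (φ⁻¹ * φ) = σ * (φ⁻¹ * φ)
        rw [← mul_assoc φ φ⁻¹ φ, mim, ← mul_assoc]
        exact hcleφ
      · have hx' : x.toFun ⟨ψ⁻¹ * ψ, inv_mul_idem ψ⟩ = true := hx
        have hxσ : x ∈ EhatAt σ := bim_char_mono x (bim_Ele hcleψe) hx'
        refine ⟨x, hxσ, ?_⟩
        apply Quotient.sound
        refine ⟨rfl, ⟨⟨ψ⁻¹ * ψ, inv_mul_idem ψ⟩, hx', ?_⟩⟩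
        show ψ * (ψ⁻¹ * ψ) = σ * (ψ⁻¹ * ψ)
        rw [← mul_assoc ψ ψ⁻¹ ψ, mim, ← mul_assoc]
        exact hcleψ
    · rintro ⟨x, hx, rfl⟩
      have hx' : x.toFun ⟨σ⁻¹ * σ, inv_mul_idem σ⟩ = true := hx
      have hx2 : x.toFun
          (⟨φ⁻¹ * φ, inv_mul_idem φ⟩ ⊔ ⟨ψ⁻¹ * ψ, inv_mul_idem ψ⟩ : E S) = true := by
        rw [← bim_Esup h]
        exact hx'
      have hor : (x.toFun ⟨φ⁻¹ * φ, inv_mul_idem φ⟩ ||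
          x.toFun ⟨ψ⁻¹ * ψ, inv_mul_idem ψ⟩) = true :=
        (x.map_sup' _ _).symm.trans hx2
      cases hb : x.toFun ⟨φ⁻¹ * φ, inv_mul_idem φ⟩ with
      | true =>
        left
        refine ⟨x, hb, ?_⟩
        apply Quotient.sound
        refine ⟨rfl, ⟨⟨φ⁻¹ * φ, inv_mul_idem φ⟩, hb, ?_⟩⟩
        show σ * (φ⁻¹ * φ) = φ * (φ⁻¹ * φ)
        rw [← mul_assoc φ φ⁻¹ φ, mim, ← mul_assoc]
        exact hcleφ.symm
      | false =>
        rw [hb] at hor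
        simp only [Bool.false_or] at hor
        right
        refine ⟨x, hor, ?_⟩
        apply Quotient.sound
        refine ⟨rfl, ⟨⟨ψ⁻¹ * ψ, inv_mul_idem ψ⟩, hor, ?_⟩⟩
        show σ * (ψ⁻¹ * ψ) = ψ * (ψ⁻¹ * ψ)
        rw [← mul_assoc ψ ψ⁻¹ ψ, mim, ← mul_assoc]
        exact hcleψ.symm
end

section
/- Let S be a Boolean inverse monoid and let W ⊆ 𝒢(S) be a compact open subset such that both maps W → Ê(S) sending [χ,x] to x and sending [χ,x] to α_χ(x) are well defined and injective on W (i.e., W is a compact open bisection of 𝒢(S)). Then there exists ψ ∈ S with W = U_ψ. In particular, together with U_φ · U_ψ = U_{φψ} and the injectivity of φ ↦ U_φ, the map ε(φ) := U_φ is a semigroup isomorphism from S onto the inverse semigroup of all compact open bisections of 𝒢(S). -/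
universe u

open BIM

/-- A compact open bisection of 𝒢(S): a compact open subset on which both
[χ,x] ↦ x and [χ,x] ↦ α_χ(x) are well defined and injective. -/
def IsCompactOpenBisection {S : Type u} [BooleanInverseMonoid S] (W : Set (Gpd S)) : Prop :=
  IsCompact W ∧ IsOpen W ∧
  ∀ (χ χ' : S) (x x' : Character S) (hx : x ∈ EhatAt χ) (hx' : x' ∈ EhatAt χ'),
    mk χ x hx ∈ W → mk χ' x' hx' ∈ W →
      ((mk χ x hx = mk χ' x' hx' → x = x') ∧
       (mk χ x hx = mk χ' x' hx' → alphaFun χ x = alphaFun χ' x') ∧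
       (x = x' → mk χ x hx = mk χ' x' hx') ∧
       (alphaFun χ x = alphaFun χ' x' → mk χ x hx = mk χ' x' hx'))

/-!
Compact open subsets of `𝒢(S)` are finite unions of basic sets `U_φ`, since these form a basis
of compact open sets. If `U_φ` and `U_ψ` lie in one bisection, then injectivity of the source
map forces the meet `m = φ ∧ ψ` to have domain `dom φ ∧ dom ψ`, and injectivity of the range map
forces it to have range `ran φ ∧ ran ψ`. Consequently `φ` and `ψ · (dom ψ \ dom m)` are
orthogonal, and their join `θ` satisfies `U_θ = U_φ ∪ U_ψ`; by induction every compact open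
bisection is some `U_θ`. Injectivity of `φ ↦ U_φ` rests on characters separating idempotents
(the prime ideal theorem for the Boolean algebra `E(S)`).
-/

namespace BIM

variable {S : Type u}

section InverseSemigroup
variable [InverseSemigroup S]

lemma idem_mul_left_comm {e f : S} (he : e * e = e) (hf : f * f = f) (x : S) :
    e * (f * x) = f * (e * x) := by
  rw [← mul_assoc, idem_comm he hf, mul_assoc]

lemma mul_inv_rev' (φ ψ : S) : (φ * ψ)⁻¹ = ψ⁻¹ * φ⁻¹ := by
  have h₁ : (φ * ψ) * (ψ⁻¹ * φ⁻¹) * (φ * ψ) = φ * ψ :=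
    calc (φ * ψ) * (ψ⁻¹ * φ⁻¹) * (φ * ψ)
        = φ * ((ψ * ψ⁻¹) * ((φ⁻¹ * φ) * ψ)) := by simp only [mul_assoc]
      _ = φ * ((φ⁻¹ * φ) * ((ψ * ψ⁻¹) * ψ)) := by
          rw [idem_mul_left_comm (mul_inv_idem ψ) (inv_mul_idem φ)]
      _ = φ * ψ := by rw [mim, ← mul_assoc, ← mul_assoc, mim]
  have h₂ : (ψ⁻¹ * φ⁻¹) * (φ * ψ) * (ψ⁻¹ * φ⁻¹) = ψ⁻¹ * φ⁻¹ :=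
    calc (ψ⁻¹ * φ⁻¹) * (φ * ψ) * (ψ⁻¹ * φ⁻¹)
        = ψ⁻¹ * ((φ⁻¹ * φ) * ((ψ * ψ⁻¹) * φ⁻¹)) := by simp only [mul_assoc]
      _ = ψ⁻¹ * ((ψ * ψ⁻¹) * (φ⁻¹ * φ * φ⁻¹)) := by
          rw [idem_mul_left_comm (inv_mul_idem φ) (mul_inv_idem ψ), mul_assoc φ⁻¹ φ]
      _ = ψ⁻¹ * φ⁻¹ := by rw [imi, ← mul_assoc, ← mul_assoc, imi]
  exact (InverseSemigroup.inv_unique _ _ h₁ h₂).symm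

lemma cle_refl (φ : S) : cle φ φ := (mim φ).symm

end InverseSemigroup

section BooleanInverseMonoid
variable [BooleanInverseMonoid S]

def domE (φ : S) : E S := ⟨φ⁻¹ * φ, inv_mul_idem φ⟩

def conjE (χ : S) (q : E S) : E S := ⟨χ⁻¹ * q.1 * χ, conj_idem χ q.2⟩

lemma mem_EhatAt_iff {φ : S} {x : Character S} : x ∈ EhatAt φ ↔ x.toFun (domE φ) = true :=
  Iff.rfl

lemma mul_domE (φ : S) : φ * (domE φ).1 = φ := by
  show φ * (φ⁻¹ * φ) = φ
  rw [← mul_assoc, mim]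

lemma cle_iff_eq_mul_domE {φ ψ : S} : cle φ ψ ↔ φ = ψ * (domE φ).1 := by
  unfold cle; rw [mul_assoc]; rfl

lemma domE_coe (e : E S) : domE e.1 = e :=
  Subtype.ext (by show e.1⁻¹ * e.1 = e.1; rw [idem_inv e.2, e.2])

lemma mem_EhatAt_coe_iff {e : E S} {x : Character S} : x ∈ EhatAt e.1 ↔ x.toFun e = true := by
  rw [mem_EhatAt_iff, domE_coe]

lemma mul_inv_eq_domE_inv (φ : S) : φ * φ⁻¹ = (domE φ⁻¹).1 := by
  show _ = φ⁻¹⁻¹ * φ⁻¹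
  rw [inv_inv']

lemma domE_mul (φ ψ : S) : domE (φ * ψ) = conjE ψ (domE φ) := by
  apply Subtype.ext
  show (φ * ψ)⁻¹ * (φ * ψ) = ψ⁻¹ * (φ⁻¹ * φ) * ψ
  rw [mul_inv_rev']
  simp only [mul_assoc]

lemma conjE_conjE (φ ψ : S) (q : E S) : conjE ψ (conjE φ q) = conjE (φ * ψ) q := by
  apply Subtype.ext
  show ψ⁻¹ * (φ⁻¹ * q.1 * φ) * ψ = (φ * ψ)⁻¹ * q.1 * (φ * ψ)
  rw [mul_inv_rev']
  simp only [mul_assoc]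

lemma conjE_coe (e q : E S) : conjE e.1 q = q ⊓ e := by
  apply Subtype.ext
  show e.1⁻¹ * q.1 * e.1 = ((q ⊓ e : E S) : S)
  rw [inf_coe, idem_inv e.2, idem_comm e.2 q.2, mul_assoc, e.2]

lemma domE_mul_coe (φ : S) (p : E S) : domE (φ * p.1) = domE φ ⊓ p := by
  rw [domE_mul, conjE_coe]

lemma mul_eq_self_iff_domE_le {φ : S} {p : E S} : φ * p.1 = φ ↔ domE φ ≤ p := by
  refine ⟨fun h => ?_, fun h => ?_⟩
  · have := domE_mul_coe φ p
    rw [h] at this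
    exact inf_eq_left.mp this.symm
  · calc φ * p.1 = φ * ((domE φ).1 * p.1) := by rw [← mul_assoc, mul_domE]
      _ = φ := by rw [← inf_coe, inf_eq_left.mpr h, mul_domE]

lemma cle_mul_coe (φ : S) (p : E S) : cle (φ * p.1) φ := by
  rw [cle_iff_eq_mul_domE, domE_mul_coe, inf_coe, ← mul_assoc, mul_domE]

lemma domE_le_of_cle {φ ψ : S} (h : cle φ ψ) : domE φ ≤ domE ψ := by
  have := domE_mul_coe ψ (domE φ)
  rw [← cle_iff_eq_mul_domE.mp h] at this
  exact inf_eq_right.mp this.symm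

lemma cle_antisymm {φ ψ : S} (h₁ : cle φ ψ) (h₂ : cle ψ φ) : φ = ψ := by
  rw [cle_iff_eq_mul_domE.mp h₁, le_antisymm (domE_le_of_cle h₁) (domE_le_of_cle h₂), mul_domE]

lemma conjE_domE_inv_of_cle {m ψ : S} (h : cle m ψ) : conjE ψ (domE m⁻¹) = domE m := by
  have hinv : m⁻¹ = (domE m).1 * ψ⁻¹ := by
    conv_lhs => rw [cle_iff_eq_mul_domE.mp h]
    rw [mul_inv_rev', idem_inv (domE m).2]
  have hm : m⁻¹ * ψ = (domE m).1 := by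
    rw [hinv, mul_assoc]
    show (domE m).1 * (domE ψ).1 = _
    rw [← inf_coe (domE m) (domE ψ), inf_eq_left.mpr (domE_le_of_cle h)]
  rw [← domE_mul, hm, domE_coe]

lemma bot_coe : ((⊥ : E S) : S) = 0 := by
  have h : (⟨0, InverseSemigroupWithZero.zero_mul' 0⟩ : E S) ≤ ⊥ := by
    rw [E_le_iff]
    exact (InverseSemigroupWithZero.mul_zero' _).symm
  rw [← le_bot_iff.mp h]

lemma domE_zero : domE (0 : S) = ⊥ :=
  Subtype.ext (by rw [bot_coe]; exact InverseSemigroupWithZero.mul_zero' _)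

lemma mul_eq_zero_of_disjoint {φ : S} {p : E S} (h : Disjoint (domE φ) p) : φ * p.1 = 0 := by
  rw [← mul_domE φ, mul_assoc, ← inf_coe, h.eq_bot, bot_coe, InverseSemigroupWithZero.mul_zero']

lemma orth_of_disjoint {p q : E S} (h : Disjoint p q) : orth p.1 q.1 := by
  have hpq : p.1 * q.1 = 0 := by rw [← inf_coe, h.eq_bot, bot_coe]
  exact ⟨by rw [idem_inv q.2, hpq], by rw [idem_inv p.2, hpq]⟩

lemma sup_coe_of_disjoint {p q : E S} (h : Disjoint p q) :
    ((p ⊔ q : E S) : S) = AdditiveInvSemigroup.vsup p.1 q.1 := by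
  have ho := orth_of_disjoint h
  set v := AdditiveInvSemigroup.vsup p.1 q.1
  have hv : cle v (p ⊔ q : E S).1 := AdditiveInvSemigroup.vsup_cle _ _ _ ho
    ((ba_le _ _).mp le_sup_left) ((ba_le _ _).mp le_sup_right)
  -- `v` lies below an idempotent, hence is itself idempotent
  have hv' : v = (p ⊔ q : E S).1 * (v⁻¹ * v) := by rw [← mul_assoc]; exact hv
  have hidem : v * v = v := by
    have := mul_idem (p ⊔ q).2 (inv_mul_idem v)
    rwa [← hv'] at this
  have hle : (⟨v, hidem⟩ : E S) ≤ p ⊔ q := (ba_le _ _).mpr hv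
  have hge : p ⊔ q ≤ ⟨v, hidem⟩ :=
    sup_le ((ba_le _ _).mpr (AdditiveInvSemigroup.cle_vsup_left _ _ ho))
      ((ba_le _ _).mpr (AdditiveInvSemigroup.cle_vsup_right _ _ ho))
  exact congrArg Subtype.val (le_antisymm hge hle)

lemma conjE_inf (ψ : S) (p q : E S) : conjE ψ (p ⊓ q) = conjE ψ p ⊓ conjE ψ q := by
  apply Subtype.ext
  rw [inf_coe]
  show ψ⁻¹ * ((p ⊓ q : E S) : S) * ψ = (ψ⁻¹ * p.1 * ψ) * (ψ⁻¹ * q.1 * ψ)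
  rw [inf_coe]
  calc ψ⁻¹ * (p.1 * q.1) * ψ = (ψ⁻¹ * ψ * ψ⁻¹) * (p.1 * (q.1 * ψ)) := by
        rw [imi]; simp only [mul_assoc]
    _ = ψ⁻¹ * (p.1 * ((ψ * ψ⁻¹) * (q.1 * ψ))) := by
        rw [idem_mul_left_comm p.2 (mul_inv_idem ψ)]; simp only [mul_assoc]
    _ = (ψ⁻¹ * p.1 * ψ) * (ψ⁻¹ * q.1 * ψ) := by simp only [mul_assoc]

lemma conjE_mono (ψ : S) {p q : E S} (h : p ≤ q) : conjE ψ p ≤ conjE ψ q := by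
  rw [← inf_eq_left, ← conjE_inf, inf_eq_left.mpr h]

lemma conjE_le_domE (ψ : S) (q : E S) : conjE ψ q ≤ domE ψ := by
  rw [E_le_iff]
  show ψ⁻¹ * q.1 * ψ = ψ⁻¹ * ψ * (ψ⁻¹ * q.1 * ψ)
  simp only [← mul_assoc]
  rw [imi]

lemma conjE_top (ψ : S) : conjE ψ ⊤ = domE ψ := by
  refine le_antisymm (conjE_le_domE ψ ⊤) ?_
  rw [← conjE_domE_inv_of_cle (cle_refl ψ)]
  exact conjE_mono ψ le_top

lemma conjE_bot (ψ : S) : conjE ψ ⊥ = ⊥ := by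
  apply Subtype.ext
  show ψ⁻¹ * ((⊥ : E S) : S) * ψ = ((⊥ : E S) : S)
  rw [bot_coe, InverseSemigroupWithZero.mul_zero', InverseSemigroupWithZero.zero_mul']

lemma conjE_sup_of_disjoint (ψ : S) {p q : E S} (h : Disjoint p q) :
    conjE ψ (p ⊔ q) = conjE ψ p ⊔ conjE ψ q := by
  have hpq : p.1 * q.1 = 0 := by rw [← inf_coe, h.eq_bot, bot_coe]
  have hconj : Disjoint (conjE ψ p) (conjE ψ q) := by
    rw [disjoint_iff, ← conjE_inf, h.eq_bot, conjE_bot]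
  have ho : orth (ψ⁻¹ * p.1) (ψ⁻¹ * q.1) := by
    constructor
    · rw [mul_inv_rev', idem_inv q.2, inv_inv']
      calc ψ⁻¹ * p.1 * (q.1 * ψ) = ψ⁻¹ * ((p.1 * q.1) * ψ) := by simp only [mul_assoc]
        _ = 0 := by
          rw [hpq, InverseSemigroupWithZero.zero_mul', InverseSemigroupWithZero.mul_zero']
    · rw [mul_inv_rev', idem_inv p.2, inv_inv']
      calc p.1 * ψ * (ψ⁻¹ * q.1) = p.1 * ((ψ * ψ⁻¹) * q.1) := by simp only [mul_assoc]
        _ = (ψ * ψ⁻¹) * (p.1 * q.1) := idem_mul_left_comm p.2 (mul_inv_idem ψ) _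
        _ = 0 := by rw [hpq, InverseSemigroupWithZero.mul_zero']
  apply Subtype.ext
  show ψ⁻¹ * (p ⊔ q : E S).1 * ψ = (conjE ψ p ⊔ conjE ψ q : E S).1
  rw [sup_coe_of_disjoint h, sup_coe_of_disjoint hconj]
  rw [AdditiveInvSemigroup.mul_vsup _ _ _ (orth_of_disjoint h),
    AdditiveInvSemigroup.vsup_mul _ _ _ ho]
  rfl

lemma conjE_sup (ψ : S) (p q : E S) : conjE ψ (p ⊔ q) = conjE ψ p ⊔ conjE ψ q := by
  refine le_antisymm ?_ (sup_le (conjE_mono ψ le_sup_left) (conjE_mono ψ le_sup_right))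
  calc conjE ψ (p ⊔ q) = conjE ψ (p ⊔ q \ p) := by rw [sup_sdiff_self_right]
    _ = conjE ψ p ⊔ conjE ψ (q \ p) := conjE_sup_of_disjoint ψ disjoint_sdiff_self_right
    _ ≤ conjE ψ p ⊔ conjE ψ q := sup_le_sup_left (conjE_mono ψ sdiff_le) _

namespace Character

lemma map_inf_eq_true_iff (x : Character S) {p q : E S} :
    x.toFun (p ⊓ q) = true ↔ x.toFun p = true ∧ x.toFun q = true := by
  rw [x.map_inf', Bool.and_eq_true]

lemma mono (x : Character S) {p q : E S} (h : p ≤ q) (hp : x.toFun p = true) :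
    x.toFun q = true := by
  rw [← inf_eq_left.mpr h, map_inf_eq_true_iff] at hp
  exact hp.2

open scoped Classical in
noncomputable def ofIsPrime (J : Order.Ideal (E S)) [hJ : J.IsPrime] : Character S where
  toFun p := decide (p ∉ J)
  map_inf' p q := by
    have : p ⊓ q ∈ J ↔ p ∈ J ∨ q ∈ J :=
      ⟨hJ.mem_or_mem, fun h => h.elim (J.lower inf_le_left) (J.lower inf_le_right)⟩
    simp [this, not_or]
  map_sup' p q := by simp [Order.Ideal.sup_mem_iff]
  map_top' := by simpa using hJ.top_notMem
  map_bot' := by simp [Order.Ideal.bot_mem]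

lemma exists_apply_eq_true {q : E S} (hq : q ≠ ⊥) : ∃ x : Character S, x.toFun q = true := by
  have hdisj : Disjoint ((Order.PFilter.principal q : Order.PFilter (E S)) : Set (E S))
      (Order.Ideal.principal (⊥ : E S) : Set (E S)) :=
    Set.disjoint_left.mpr fun r hqr hr =>
      hq (le_bot_iff.mp ((Order.PFilter.mem_principal.mp hqr).trans (Order.Ideal.mem_principal.mp hr)))
  obtain ⟨J, hJ, -, hFJ⟩ := DistribLattice.prime_ideal_of_disjoint_filter_ideal hdisj
  refine ⟨ofIsPrime J, ?_⟩
  simpa [ofIsPrime] using Set.disjoint_left.mp hFJ (Order.PFilter.mem_principal.mpr le_rfl)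

end Character

lemma le_of_forall_character {p q : E S}
    (h : ∀ x : Character S, x.toFun p = true → x.toFun q = true) : p ≤ q := by
  by_contra hpq
  obtain ⟨x, hx⟩ := Character.exists_apply_eq_true fun h => hpq (sdiff_eq_bot_iff.mp h)
  have hxq := h x (x.mono sdiff_le hx)
  have := x.map_inf' (p \ q) q
  rw [disjoint_sdiff_self_left.eq_bot, x.map_bot', hx, hxq] at this
  exact Bool.false_ne_true this

lemma EhatAt_subset_of_cle {α χ : S} (h : cle α χ) : EhatAt α ⊆ EhatAt χ :=
  fun x hx => x.mono (domE_le_of_cle h) hx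

lemma EhatAt_mul_subset (φ ψ : S) : EhatAt (φ * ψ) ⊆ EhatAt ψ := fun y hy =>
  y.mono (conjE_le_domE ψ (domE φ)) (by rw [← domE_mul]; exact hy)

lemma mk_eq_mk_iff {χ χ' : S} {x x' : Character S} (hx : x ∈ EhatAt χ) (hx' : x' ∈ EhatAt χ') :
    mk χ x hx = mk χ' x' hx' ↔ x = x' ∧ ∃ p : E S, x.toFun p = true ∧ χ * p.1 = χ' * p.1 :=
  Quotient.eq

lemma mk_mem_U {χ : S} {x : Character S} (hx : x ∈ EhatAt χ) : mk χ x hx ∈ U χ :=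
  ⟨x, hx, rfl⟩

lemma mk_mem_U_iff {χ ψ : S} {x : Character S} (hx : x ∈ EhatAt χ) :
    mk χ x hx ∈ U ψ ↔ ∃ hψ : x ∈ EhatAt ψ, mk χ x hx = mk ψ x hψ := by
  refine ⟨fun ⟨x', hx', h⟩ => ?_, fun ⟨hψ, h⟩ => ⟨x, hψ, h⟩⟩
  obtain rfl := ((mk_eq_mk_iff hx hx').mp h).1
  exact ⟨hx', h⟩

lemma mk_eq_of_cle {α χ : S} (h : cle α χ) {x : Character S} (hχ : x ∈ EhatAt χ)
    (hα : x ∈ EhatAt α) : mk χ x hχ = mk α x hα :=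
  (mk_eq_mk_iff hχ hα).mpr ⟨rfl, domE α, hα, by rw [← cle_iff_eq_mul_domE.mp h, mul_domE]⟩

lemma U_subset_of_cle {α χ : S} (h : cle α χ) : U α ⊆ U χ := by
  rintro _ ⟨x, hx, rfl⟩
  exact ⟨x, EhatAt_subset_of_cle h hx, (mk_eq_of_cle h _ hx).symm⟩

lemma U_zero : U (0 : S) = ∅ := by
  refine Set.eq_empty_of_forall_notMem ?_
  rintro _ ⟨x, hx, -⟩
  rw [mem_EhatAt_iff, domE_zero, x.map_bot'] at hx
  exact Bool.false_ne_true hx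

lemma U_eq_union_of_cle {α β γ : S} (hα : cle α γ) (hβ : cle β γ)
    (h : domE γ ≤ domE α ⊔ domE β) : U γ = U α ∪ U β := by
  refine Set.Subset.antisymm ?_ (Set.union_subset (U_subset_of_cle hα) (U_subset_of_cle hβ))
  rintro _ ⟨x, hx, rfl⟩
  have hsup := x.mono h hx
  rw [x.map_sup', Bool.or_eq_true] at hsup
  rcases hsup with hxα | hxβ
  · exact Or.inl ⟨x, hxα, mk_eq_of_cle hα hx hxα⟩
  · exact Or.inr ⟨x, hxβ, mk_eq_of_cle hβ hx hxβ⟩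

lemma exists_mk_vinf_eq {φ ψ : S} {x y : Character S} {hx : x ∈ EhatAt φ} {hy : y ∈ EhatAt ψ}
    (h : mk φ x hx = mk ψ y hy) :
    ∃ hm : x ∈ EhatAt (BooleanInverseMonoid.vinf φ ψ),
      mk φ x hx = mk (BooleanInverseMonoid.vinf φ ψ) x hm := by
  obtain ⟨-, p, hxp, hp⟩ := (mk_eq_mk_iff hx hy).mp h
  have hle : cle (φ * p.1) (BooleanInverseMonoid.vinf φ ψ) :=
    BooleanInverseMonoid.cle_vinf _ _ _ (cle_mul_coe φ p) (hp ▸ cle_mul_coe ψ p)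
  have hxφp : x ∈ EhatAt (φ * p.1) := by
    rw [mem_EhatAt_iff, domE_mul_coe, Character.map_inf_eq_true_iff]
    exact ⟨hx, hxp⟩
  have hm := EhatAt_subset_of_cle hle hxφp
  exact ⟨hm, (mk_eq_of_cle (cle_mul_coe φ p) hx hxφp).trans (mk_eq_of_cle hle hm hxφp).symm⟩

lemma U_inter (φ ψ : S) : U φ ∩ U ψ = U (BooleanInverseMonoid.vinf φ ψ) := by
  refine Set.Subset.antisymm ?_ fun g hg =>
    ⟨U_subset_of_cle (BooleanInverseMonoid.vinf_cle_left φ ψ) hg,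
      U_subset_of_cle (BooleanInverseMonoid.vinf_cle_right φ ψ) hg⟩
  rintro _ ⟨⟨x, hx, rfl⟩, hψ⟩
  obtain ⟨_, h⟩ := (mk_mem_U_iff hx).mp hψ
  obtain ⟨hm, h'⟩ := exists_mk_vinf_eq h
  exact ⟨x, hm, h'⟩

lemma cle_of_U_subset {φ ψ : S} (h : U φ ⊆ U ψ) : cle φ ψ := by
  have hdom : domE φ ≤ domE (BooleanInverseMonoid.vinf φ ψ) :=
    le_of_forall_character fun x hx => by
      obtain ⟨_, heq⟩ := (mk_mem_U_iff hx).mp (h (mk_mem_U hx))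
      exact (exists_mk_vinf_eq heq).1
  have hφ : BooleanInverseMonoid.vinf φ ψ = φ :=
    (cle_iff_eq_mul_domE.mp (BooleanInverseMonoid.vinf_cle_left φ ψ)).trans
      (mul_eq_self_iff_domE_le.mpr hdom)
  exact hφ ▸ BooleanInverseMonoid.vinf_cle_right φ ψ

lemma alphaFun_eq_of_mk_eq {χ χ' : S} {x x' : Character S} {hx : x ∈ EhatAt χ}
    {hx' : x' ∈ EhatAt χ'} (h : mk χ x hx = mk χ' x' hx') : alphaFun χ x = alphaFun χ' x' := by
  obtain ⟨rfl, p, hxp, hp⟩ := (mk_eq_mk_iff hx hx').mp h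
  funext q
  -- restricting to `p`, where `χ` and `χ'` agree, does not change the value of `x`
  have key : ∀ r : E S, x.toFun r = x.toFun (conjE p.1 r) := fun r => by
    rw [conjE_coe, x.map_inf', hxp, Bool.and_true]
  show x.toFun (conjE χ q) = x.toFun (conjE χ' q)
  rw [key (conjE χ q), key (conjE χ' q), conjE_conjE, conjE_conjE, hp]

lemma alphaFun_coe (e : E S) {z : Character S} (hz : z.toFun e = true) :
    alphaFun e.1 z = z.toFun := by
  funext q
  show z.toFun (conjE e.1 q) = z.toFun q
  rw [conjE_coe, z.map_inf', hz, Bool.and_true]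

def alphaChar (ψ : S) (y : Character S) (hy : y ∈ EhatAt ψ) : Character S where
  toFun := alphaFun ψ y
  map_inf' p q := by
    show y.toFun (conjE ψ (p ⊓ q)) = (y.toFun (conjE ψ p) && y.toFun (conjE ψ q))
    rw [conjE_inf, y.map_inf']
  map_sup' p q := by
    show y.toFun (conjE ψ (p ⊔ q)) = (y.toFun (conjE ψ p) || y.toFun (conjE ψ q))
    rw [conjE_sup, y.map_sup']
  map_top' := by
    show y.toFun (conjE ψ ⊤) = true
    rw [conjE_top]
    exact hy
  map_bot' := by
    show y.toFun (conjE ψ ⊥) = false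
    rw [conjE_bot, y.map_bot']

lemma alphaChar_mem_EhatAt_iff {φ ψ : S} {y : Character S} {hy : y ∈ EhatAt ψ} :
    alphaChar ψ y hy ∈ EhatAt φ ↔ y ∈ EhatAt (φ * ψ) := by
  rw [mem_EhatAt_iff, mem_EhatAt_iff, domE_mul]
  rfl

lemma alphaFun_alphaChar (φ ψ : S) {y : Character S} (hy : y ∈ EhatAt ψ) :
    alphaFun φ (alphaChar ψ y hy) = alphaFun (φ * ψ) y :=
  funext fun q => congrArg y.toFun (conjE_conjE φ ψ q)

lemma eq_of_alphaFun_eq {ψ : S} {x x' : Character S} (hx : x ∈ EhatAt ψ) (hx' : x' ∈ EhatAt ψ)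
    (h : alphaFun ψ x = alphaFun ψ x') : x = x' := by
  have hinv : ∀ {y : Character S} (hy : y ∈ EhatAt ψ),
      alphaFun ψ⁻¹ (alphaChar ψ y hy) = y.toFun := fun hy => by
    rw [alphaFun_alphaChar]
    exact alphaFun_coe (domE ψ) hy
  have hα : alphaChar ψ x hx = alphaChar ψ x' hx' := Character.ext (congrFun h)
  exact Character.ext fun p => by rw [← hinv hx, ← hinv hx', hα]

lemma exists_alphaFun_eq {φ : S} {z : Character S} (hz : z ∈ EhatAt φ⁻¹) :
    ∃ (x : Character S) (_ : x ∈ EhatAt φ), alphaFun φ x = z.toFun := by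
  refine ⟨alphaChar φ⁻¹ z hz, ?_, ?_⟩
  · rw [alphaChar_mem_EhatAt_iff, mul_inv_eq_domE_inv, mem_EhatAt_coe_iff]
    exact hz
  · rw [alphaFun_alphaChar, mul_inv_eq_domE_inv]
    exact alphaFun_coe (domE φ⁻¹) hz

lemma isOpen_U (φ : S) : IsOpen (U φ) :=
  TopologicalSpace.isOpen_generateFrom_of_mem ⟨φ, rfl⟩

lemma isTopologicalBasis_U : TopologicalSpace.IsTopologicalBasis (Set.range (U (S := S))) where
  exists_subset_inter := by
    rintro _ ⟨φ, rfl⟩ _ ⟨ψ, rfl⟩ g hg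
    exact ⟨_, ⟨_, rfl⟩, U_inter φ ψ ▸ hg, (U_inter φ ψ).ge⟩
  sUnion_eq := by
    refine Set.eq_univ_of_forall fun g => ?_
    induction g using Quotient.ind with
    | _ a => exact ⟨U a.1.1, ⟨a.1.1, rfl⟩, a.1.2, a.2, rfl⟩
  eq_generateFrom := by
    show TopologicalSpace.generateFrom _ = TopologicalSpace.generateFrom _
    simp only [Set.range, eq_comm]

lemma continuous_toFun_apply (p : E S) : Continuous fun x : Character S => x.toFun p :=
  (continuous_apply p).comp continuous_induced_dom

lemma isOpen_setOf_eq_true (p : E S) : IsOpen {x : Character S | x.toFun p = true} :=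
  (continuous_toFun_apply p).isOpen_preimage {true} (isOpen_discrete _)

lemma isClosed_range_toFun : IsClosed (Set.range fun x : Character S => x.toFun) := by
  have hrange : Set.range (fun x : Character S => x.toFun) =
      (⋂ (p : E S) (q : E S), {f | f (p ⊓ q) = (f p && f q)}) ∩
      (⋂ (p : E S) (q : E S), {f | f (p ⊔ q) = (f p || f q)}) ∩
      {f | f ⊤ = true} ∩ {f | f ⊥ = false} := by
    ext f
    simp only [Set.mem_range, Set.mem_inter_iff, Set.mem_iInter, Set.mem_ofPred_eq]
    exact ⟨by rintro ⟨x, rfl⟩; exact ⟨⟨⟨x.map_inf', x.map_sup'⟩, x.map_top'⟩, x.map_bot'⟩,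
      fun ⟨⟨⟨h₁, h₂⟩, h₃⟩, h₄⟩ => ⟨⟨f, h₁, h₂, h₃, h₄⟩, rfl⟩⟩
  have hbin : ∀ (op : Bool → Bool → Bool) (p q : E S),
      Continuous fun f : E S → Bool => op (f p) (f q) := fun op p q => by
    show Continuous ((fun b : Bool × Bool => op b.1 b.2) ∘ fun f : E S → Bool => (f p, f q))
    exact continuous_of_discreteTopology.comp ((continuous_apply p).prodMk (continuous_apply q))
  rw [hrange]
  refine ((IsClosed.inter ?_ ?_).inter ?_).inter ?_
  · exact isClosed_iInter fun p => isClosed_iInter fun q =>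
      isClosed_eq (continuous_apply _) (hbin _ p q)
  · exact isClosed_iInter fun p => isClosed_iInter fun q =>
      isClosed_eq (continuous_apply _) (hbin _ p q)
  · exact isClosed_eq (continuous_apply _) continuous_const
  · exact isClosed_eq (continuous_apply _) continuous_const

instance : CompactSpace (Character S) :=
  ⟨(Topology.IsInducing.induced _).isCompact_iff.mpr
    (Set.image_univ ▸ isClosed_range_toFun.isCompact)⟩

lemma continuous_mk (ψ : S) : Continuous fun z : EhatAt ψ => mk ψ z.1 z.2 := by
  rw [continuous_generateFrom_iff]
  rintro _ ⟨χ, rfl⟩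
  have hpre : (fun z : EhatAt ψ => mk ψ z.1 z.2) ⁻¹' U χ = Subtype.val ⁻¹'
      ⋃ (p : E S) (_ : ψ * p.1 = χ * p.1),
        {x : Character S | x.toFun (domE χ) = true} ∩ {x | x.toFun p = true} := by
    ext ⟨x, hx⟩
    simp only [Set.mem_preimage, mk_mem_U_iff, mk_eq_mk_iff, true_and, Set.mem_iUnion,
      Set.mem_inter_iff, Set.mem_ofPred_eq]
    exact ⟨fun ⟨hχ, p, hxp, hp⟩ => ⟨p, hp, hχ, hxp⟩, fun ⟨p, hp, hχ, hxp⟩ => ⟨hχ, p, hxp, hp⟩⟩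
  rw [hpre]
  exact (isOpen_iUnion fun p => isOpen_iUnion fun _ =>
    (isOpen_setOf_eq_true _).inter (isOpen_setOf_eq_true p)).preimage continuous_subtype_val

lemma isCompact_U (ψ : S) : IsCompact (U ψ) := by
  have : CompactSpace (EhatAt ψ) := isCompact_iff_compactSpace.mp
    (isClosed_eq (continuous_toFun_apply (domE ψ)) continuous_const).isCompact
  have hrange : U ψ = Set.range fun z : EhatAt ψ => mk ψ z.1 z.2 := by
    ext g
    exact ⟨fun ⟨x, hx, h⟩ => ⟨⟨x, hx⟩, h.symm⟩, fun ⟨⟨x, hx⟩, h⟩ => ⟨x, hx, h.symm⟩⟩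
  rw [hrange]
  exact isCompact_range (continuous_mk ψ)

-- the third conjunct of `IsCompactOpenBisection`
def IsBisection (W : Set (Gpd S)) : Prop :=
  ∀ (χ χ' : S) (x x' : Character S) (hx : x ∈ EhatAt χ) (hx' : x' ∈ EhatAt χ'),
    mk χ x hx ∈ W → mk χ' x' hx' ∈ W →
      ((mk χ x hx = mk χ' x' hx' → x = x') ∧
       (mk χ x hx = mk χ' x' hx' → alphaFun χ x = alphaFun χ' x') ∧
       (x = x' → mk χ x hx = mk χ' x' hx') ∧
       (alphaFun χ x = alphaFun χ' x' → mk χ x hx = mk χ' x' hx'))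

lemma isBisection_U (ψ : S) : IsBisection (U ψ) := by
  intro χ χ' x x' hx hx' hmem hmem'
  obtain ⟨hψ, hχψ⟩ := (mk_mem_U_iff hx).mp hmem
  obtain ⟨hψ', hχψ'⟩ := (mk_mem_U_iff hx').mp hmem'
  have hsrc : x = x' → mk χ x hx = mk χ' x' hx' := by
    rintro rfl
    rw [hχψ, hχψ']
  refine ⟨fun h => ((mk_eq_mk_iff hx hx').mp h).1, alphaFun_eq_of_mk_eq, hsrc, fun h => ?_⟩
  refine hsrc (eq_of_alphaFun_eq hψ hψ' ?_)
  rw [← alphaFun_eq_of_mk_eq hχψ, ← alphaFun_eq_of_mk_eq hχψ', h]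

lemma domE_inf_le_domE_vinf {W : Set (Gpd S)} (hW : IsBisection W) {φ ψ : S} (hφW : U φ ⊆ W)
    (hψW : U ψ ⊆ W) : domE φ ⊓ domE ψ ≤ domE (BooleanInverseMonoid.vinf φ ψ) :=
  le_of_forall_character fun x hx => by
    rw [Character.map_inf_eq_true_iff] at hx
    have h := (hW φ ψ x x hx.1 hx.2 (hφW (mk_mem_U _)) (hψW (mk_mem_U _))).2.2.1 rfl
    exact (exists_mk_vinf_eq h).1

lemma domE_inv_inf_le_domE_vinf_inv {W : Set (Gpd S)} (hW : IsBisection W) {φ ψ : S}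
    (hφW : U φ ⊆ W) (hψW : U ψ ⊆ W) :
    domE φ⁻¹ ⊓ domE ψ⁻¹ ≤ domE (BooleanInverseMonoid.vinf φ ψ)⁻¹ :=
  le_of_forall_character fun z hz => by
    rw [Character.map_inf_eq_true_iff] at hz
    obtain ⟨x, hx, hxz⟩ := exists_alphaFun_eq hz.1
    obtain ⟨y, hy, hyz⟩ := exists_alphaFun_eq hz.2
    have h := (hW φ ψ x y hx hy (hφW (mk_mem_U _)) (hψW (mk_mem_U _))).2.2.2 (hxz.trans hyz.symm)
    obtain ⟨hxm, hmk⟩ := exists_mk_vinf_eq h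
    rw [← hxz, alphaFun_eq_of_mk_eq hmk]
    exact (alphaChar_mem_EhatAt_iff (hy := hxm)).mpr
      ((mem_EhatAt_coe_iff (e := domE (BooleanInverseMonoid.vinf φ ψ))).mpr hxm)

lemma exists_U_eq_union_of_domE_inf_le {φ ψ : S}
    (hdom : domE φ ⊓ domE ψ ≤ domE (BooleanInverseMonoid.vinf φ ψ))
    (hran : domE φ⁻¹ ⊓ domE ψ⁻¹ ≤ domE (BooleanInverseMonoid.vinf φ ψ)⁻¹) :
    ∃ θ : S, U θ = U φ ∪ U ψ := by
  set m := BooleanInverseMonoid.vinf φ ψ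
  have hmφ : cle m φ := BooleanInverseMonoid.vinf_cle_left φ ψ
  have hmψ : cle m ψ := BooleanInverseMonoid.vinf_cle_right φ ψ
  set d := domE ψ \ domE m
  set ψ' := ψ * d.1
  have hdisj : Disjoint (domE m) d := disjoint_sdiff_self_right
  have hφd : φ * d.1 = 0 := mul_eq_zero_of_disjoint <| by
    refine disjoint_iff.mpr (le_bot_iff.mp ?_)
    calc domE φ ⊓ d ≤ domE φ ⊓ domE ψ ⊓ d := by
          rw [inf_assoc, inf_eq_right.mpr (sdiff_le : d ≤ domE ψ)]
      _ ≤ domE m ⊓ d := inf_le_inf_right d hdom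
      _ = ⊥ := hdisj.eq_bot
  have hφψ : domE (φ⁻¹ * ψ) ≤ domE m :=
    calc domE (φ⁻¹ * ψ) = conjE ψ (domE φ⁻¹) ⊓ conjE ψ (domE ψ⁻¹) := by
          rw [domE_mul, conjE_domE_inv_of_cle (cle_refl ψ),
            inf_eq_left.mpr (conjE_le_domE ψ _)]
      _ = conjE ψ (domE φ⁻¹ ⊓ domE ψ⁻¹) := (conjE_inf ψ _ _).symm
      _ ≤ conjE ψ (domE m⁻¹) := conjE_mono ψ hran
      _ = domE m := conjE_domE_inv_of_cle hmψ
  have horth : orth φ ψ' := by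
    constructor
    · rw [mul_inv_rev', idem_inv d.2, ← mul_assoc, hφd, InverseSemigroupWithZero.zero_mul']
    · rw [← mul_assoc]
      exact mul_eq_zero_of_disjoint (hdisj.mono_left hφψ)
  set θ := AdditiveInvSemigroup.vsup φ ψ'
  have hθ : domE θ ≤ domE φ ⊔ domE ψ' := by
    rw [← mul_eq_self_iff_domE_le, AdditiveInvSemigroup.vsup_mul _ _ _ horth,
      mul_eq_self_iff_domE_le.mpr le_sup_left, mul_eq_self_iff_domE_le.mpr le_sup_right]
  have hψ : domE ψ ≤ domE m ⊔ domE ψ' := by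
    rw [domE_mul_coe, inf_eq_right.mpr sdiff_le]
    exact le_sup_sdiff
  refine ⟨θ, ?_⟩
  rw [U_eq_union_of_cle (AdditiveInvSemigroup.cle_vsup_left _ _ horth)
      (AdditiveInvSemigroup.cle_vsup_right _ _ horth) hθ,
    U_eq_union_of_cle hmψ (cle_mul_coe ψ d) hψ, ← Set.union_assoc,
    Set.union_eq_left.mpr (U_subset_of_cle hmφ)]

lemma exists_U_eq_biUnion {W : Set (Gpd S)} (hW : IsBisection W) {s : Set S} (hs : s.Finite)
    (hsW : ∀ φ ∈ s, U φ ⊆ W) : ∃ θ : S, U θ = ⋃ φ ∈ s, U φ := by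
  induction s, hs using Set.Finite.induction_on with
  | empty => exact ⟨0, by rw [U_zero, Set.biUnion_empty]⟩
  | @insert φ s _ _ ih =>
    obtain ⟨θ, hθ⟩ := ih fun ψ hψ => hsW ψ (Set.mem_insert_of_mem φ hψ)
    have hθW : U θ ⊆ W := hθ ▸ Set.iUnion₂_subset fun ψ hψ => hsW ψ (Set.mem_insert_of_mem φ hψ)
    have hφW := hsW φ (Set.mem_insert φ s)
    obtain ⟨θ', hθ'⟩ := exists_U_eq_union_of_domE_inf_le (domE_inf_le_domE_vinf hW hφW hθW)
      (domE_inv_inf_le_domE_vinf_inv hW hφW hθW)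
    exact ⟨θ', by rw [hθ', hθ, Set.biUnion_insert]⟩

lemma exists_eq_U_of_isCompactOpenBisection {W : Set (Gpd S)} (hW : IsCompactOpenBisection W) :
    ∃ ψ : S, W = U ψ := by
  obtain ⟨s, hs, rfl⟩ := (isCompact_open_iff_eq_finite_iUnion_of_isTopologicalBasis U
    isTopologicalBasis_U isCompact_U W).mp ⟨hW.1, hW.2.1⟩
  obtain ⟨θ, hθ⟩ := exists_U_eq_biUnion hW.2.2 hs fun φ hφ => Set.subset_biUnion_of_mem hφ
  exact ⟨θ, hθ.symm⟩

end BooleanInverseMonoid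

end BIM

/-- Every compact open bisection of 𝒢(S) is of the form U_ψ; in
particular ε(φ) := U_φ is a semigroup isomorphism from S onto the inverse
semigroup of all compact open bisections of 𝒢(S) (with set-product of
bisections as multiplication). -/
theorem stmt19 {S : Type u} [BooleanInverseMonoid S] :
    -- surjectivity onto compact open bisections
    (∀ W : Set (Gpd S), IsCompactOpenBisection W → ∃ ψ : S, W = U ψ) ∧
    -- each U_ψ is a compact open bisection
    (∀ ψ : S, IsCompactOpenBisection (U (S := S) ψ)) ∧
    -- injectivity of ε
    (Function.Injective (fun φ : S => U φ)) ∧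
    -- multiplicativity of ε: U_φ · U_ψ = U_{φψ}
    (∀ φ ψ : S,
      {g : Gpd S | ∃ (x y : Character S) (_hx : x ∈ EhatAt φ) (_hy : y ∈ EhatAt ψ),
          x.toFun = alphaFun ψ y ∧ ∃ hc : y ∈ EhatAt (φ * ψ), g = mk (φ * ψ) y hc}
        = U (φ * ψ)) := by
  refine ⟨fun W hW => exists_eq_U_of_isCompactOpenBisection hW,
    fun ψ => ⟨isCompact_U ψ, isOpen_U ψ, isBisection_U ψ⟩,
    fun φ ψ h => cle_antisymm (cle_of_U_subset h.le) (cle_of_U_subset h.ge), fun φ ψ => ?_⟩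
  refine Set.Subset.antisymm (fun g ⟨_, _, _, _, _, hc, hg⟩ => hg ▸ mk_mem_U hc) ?_
  rintro _ ⟨y, hy, rfl⟩
  have hyψ := EhatAt_mul_subset φ ψ hy
  exact ⟨alphaChar ψ y hyψ, y, alphaChar_mem_EhatAt_iff.mpr hy, hyψ, rfl, hy, rfl⟩
end
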